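/- arXiv:2405.11520 — 2 statements merged into one kernel-verified Lean document; each statement's English description precedes it below -/
import Mathlib

section
/- Let γ denote the Euler–Mascheroni constant and set F(r) = 1 − ∫₀^∞ exp(−(t + r/t)) dt for r > 0. Then lim_{r → 0⁺} F(r) / ( r·(1 − 2γ − ln r) ) = 1. -/
open MeasureTheory Real Set Filter

lemma integrableOn_of_bddOn {f : ℝ → ℝ} {s : Set ℝ} (hs : MeasurableSet s)
    (hμ : volume s < ⊤) (hc : ContinuousOn f s) {C : ℝ} (hC : ∀ x ∈ s, |f x| ≤ C) :
    IntegrableOn f s := by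
  refine Integrable.mono' (g := fun _ => C) (integrableOn_const hμ.ne)
    (hc.aestronglyMeasurable hs) ?_
  filter_upwards [ae_restrict_mem hs] with x hx
  simpa using hC x hx

lemma hasDerivAt_exp_neg (y : ℝ) : HasDerivAt (fun y : ℝ => Real.exp (-y)) (-Real.exp (-y)) y := by
  simpa [Function.comp_def] using (Real.hasDerivAt_exp (-y)).comp y (hasDerivAt_neg y)

lemma exp_neg_le_quadratic {x : ℝ} (hx : 0 ≤ x) : Real.exp (-x) ≤ 1 - x + x^2/2 := by
  have h : MonotoneOn (fun y => (1 - y + y^2/2) - Real.exp (-y)) (Ici (0:ℝ)) := by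
    have hd : ∀ y : ℝ, HasDerivAt (fun y => (1 - y + y^2/2) - Real.exp (-y))
        ((y - 1) + Real.exp (-y)) y := by
      intro y
      have h1 : HasDerivAt (fun y : ℝ => 1 - y + y^2/2) (y - 1) y := by
        have := ((hasDerivAt_const y (1:ℝ)).sub (hasDerivAt_id y)).add
          ((hasDerivAt_pow 2 y).div_const 2)
        exact this.congr_deriv (by norm_num; ring)
      simpa [Pi.sub_def] using h1.sub (hasDerivAt_exp_neg y)
    refine monotoneOn_of_deriv_nonneg (convex_Ici 0) (by fun_prop) ?_ ?_
    · exact fun y _ => (hd y).differentiableAt.differentiableWithinAt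
    · intro y hy
      rw [(hd y).deriv]
      rw [interior_Ici] at hy
      have : 1 - y ≤ Real.exp (-y) := by linarith [Real.add_one_le_exp (-y)]
      linarith
  have := h self_mem_Ici hx hx
  simp only [neg_zero, Real.exp_zero] at this
  nlinarith [this]

lemma gamma_integral_repr : ∫ t in Ioi (0:ℝ), Real.exp (-t) * Real.log t = -Real.eulerMascheroniConstant := by
  have h1 : HasDerivAt Complex.GammaIntegral
      (∫ t : ℝ in Ioi 0, (t:ℂ) ^ ((1:ℂ) - 1) * (Real.log t * Real.exp (-t))) 1 :=
    Complex.hasDerivAt_GammaIntegral (by norm_num)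
  have hI : (∫ t : ℝ in Ioi 0, (t:ℂ) ^ ((1:ℂ) - 1) * (Real.log t * Real.exp (-t)))
      = ((∫ t in Ioi (0:ℝ), Real.exp (-t) * Real.log t : ℝ) : ℂ) := by
    rw [show ((∫ t in Ioi (0:ℝ), Real.exp (-t) * Real.log t : ℝ) : ℂ)
        = ∫ t in Ioi (0:ℝ), ((Real.exp (-t) * Real.log t : ℝ) : ℂ) from (integral_ofReal).symm]
    refine setIntegral_congr_fun measurableSet_Ioi fun t ht => ?_
    simp [Complex.cpow_zero]
    push_cast
    ring
  have h2 : HasDerivAt Complex.Gamma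
      ((∫ t in Ioi (0:ℝ), Real.exp (-t) * Real.log t : ℝ) : ℂ) 1 := by
    rw [← hI]
    refine h1.congr_of_eventuallyEq ?_
    have hopen : IsOpen {s : ℂ | 0 < s.re} := isOpen_lt continuous_const Complex.continuous_re
    filter_upwards [hopen.mem_nhds (by norm_num : (0:ℝ) < (1:ℂ).re)] with s hs
    exact Complex.Gamma_eq_integral hs
  have h3 : HasDerivAt (fun x : ℝ => Complex.Gamma (x : ℂ))
      ((∫ t in Ioi (0:ℝ), Real.exp (-t) * Real.log t : ℝ) : ℂ) 1 := by
    exact_mod_cast h2.comp_ofReal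
  have h4 : HasDerivAt (fun x : ℝ => ((Real.Gamma x : ℂ)))
      ((-Real.eulerMascheroniConstant : ℝ) : ℂ) 1 :=
    Real.hasDerivAt_Gamma_one.ofReal_comp
  have h5 : (fun x : ℝ => Complex.Gamma (x : ℂ)) = fun x : ℝ => ((Real.Gamma x : ℂ)) := by
    ext x; exact Complex.Gamma_ofReal x
  rw [h5] at h3
  have := h3.unique h4
  exact_mod_cast this

-- integrability of exp(-t) * log t on (0,1]
lemma intOn_exp_log_Ioc : IntegrableOn (fun t => Real.exp (-t) * Real.log t) (Ioc (0:ℝ) 1) := by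
  have hbd : Integrable (fun t : ℝ => 2 * t ^ (-(1/2) : ℝ)) (volume.restrict (Ioc (0:ℝ) 1)) := by
    have := (intervalIntegral.intervalIntegrable_rpow' (by norm_num : (-1:ℝ) < -(1/2)) (a := 0) (b := 1))
    rw [intervalIntegrable_iff_integrableOn_Ioc_of_le zero_le_one] at this
    exact this.const_mul 2
  refine Integrable.mono' hbd ?_ ?_
  · exact (((continuous_exp.comp continuous_neg).continuousOn).mul
      (continuousOn_log.mono (fun x hx => ne_of_gt hx.1))).aestronglyMeasurable measurableSet_Ioc
  · filter_upwards [ae_restrict_mem measurableSet_Ioc] with t ht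
    have ht0 := ht.1
    have ht1 := ht.2
    have hlog : Real.log t ≤ 0 := Real.log_nonpos ht0.le ht1
    have hsq : 0 < Real.sqrt t := Real.sqrt_pos.2 ht0
    have h1 : -Real.log t = 2 * Real.log (Real.sqrt t)⁻¹ := by
      rw [Real.log_inv, Real.log_sqrt ht0.le]; ring
    have h2 : Real.log (Real.sqrt t)⁻¹ ≤ (Real.sqrt t)⁻¹ := by
      calc Real.log (Real.sqrt t)⁻¹ ≤ (Real.sqrt t)⁻¹ - 1 :=
        Real.log_le_sub_one_of_pos (inv_pos.2 hsq)
      _ ≤ _ := by linarith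
    have h3 : (Real.sqrt t)⁻¹ = t ^ (-(1/2) : ℝ) := by
      rw [Real.sqrt_eq_rpow, ← Real.rpow_neg ht0.le]
    rw [Real.norm_eq_abs, abs_mul]
    have : |Real.exp (-t)| ≤ 1 := by
      rw [abs_of_pos (Real.exp_pos _)]
      exact Real.exp_le_one_iff.2 (by linarith)
    calc |Real.exp (-t)| * |Real.log t| ≤ 1 * |Real.log t| :=
        mul_le_mul_of_nonneg_right this (abs_nonneg _)
      _ = -Real.log t := by rw [one_mul, abs_of_nonpos hlog]
      _ ≤ 2 * t ^ (-(1/2) : ℝ) := by rw [h1, ← h3]; linarith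

lemma intOn_expm1_div : IntegrableOn (fun v => (Real.exp (-v) - 1)/v) (Ioc (0:ℝ) 1) := by
  refine integrableOn_of_bddOn measurableSet_Ioc measure_Ioc_lt_top ?_ (C := 1) ?_
  · exact (((continuous_exp.comp continuous_neg).continuousOn.sub continuousOn_const).div
      continuousOn_id (fun x hx => ne_of_gt hx.1))
  · intro v hv
    have h1 : 1 - Real.exp (-v) ≤ v := by linarith [Real.add_one_le_exp (-v)]
    have h2 : 0 ≤ 1 - Real.exp (-v) := by
      have := Real.exp_le_one_iff.2 (by linarith [hv.1] : -v ≤ 0); linarith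
    rw [abs_div, abs_of_pos hv.1, abs_of_nonpos (by linarith : Real.exp (-v) - 1 ≤ 0)]
    rw [div_le_one hv.1]; linarith

lemma cont_within_zero_aux {f : ℝ → ℝ} (hf0 : f 0 = 0)
    (hb : ∀ᶠ x in nhdsWithin 0 (Ioi 0), |f x| ≤ |Real.log x * x|) :
    Tendsto f (nhdsWithin 0 (Icc 0 1)) (nhds 0) := by
  have hsub : Icc (0:ℝ) 1 ⊆ {0} ∪ Ioi 0 := by
    intro x hx; rcases eq_or_lt_of_le hx.1 with h | h
    · exact Or.inl (by simp [← h])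
    · exact Or.inr h
  refine Tendsto.mono_left ?_ (nhdsWithin_mono 0 hsub)
  rw [nhdsWithin_union]
  rw [tendsto_sup]
  constructor
  · rw [nhdsWithin_singleton]
    simpa [hf0] using tendsto_pure_nhds f 0
  · have h0 : Tendsto (fun x : ℝ => |Real.log x * x|) (nhdsWithin 0 (Ioi 0)) (nhds 0) := by
      have := tendsto_log_mul_rpow_nhdsGT_zero one_pos
      simp only [Real.rpow_one] at this
      simpa using this.abs
    exact squeeze_zero_norm' hb h0

lemma ibp1 : ∫ t in Ioc (0:ℝ) 1, Real.exp (-t) * Real.log t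
    = ∫ v in Ioc (0:ℝ) 1, (Real.exp (-v) - 1)/v := by
  set f : ℝ → ℝ := fun t => (1 - Real.exp (-t)) * Real.log t with hf
  set g : ℝ → ℝ := fun t => Real.exp (-t) * Real.log t + (1 - Real.exp (-t))/t with hg
  have hone : IntegrableOn (fun t => (1 - Real.exp (-t))/t) (Ioc (0:ℝ) 1) := by
    have := intOn_expm1_div.neg
    refine IntegrableOn.congr_fun this (fun x hx => by simp; ring) measurableSet_Ioc
  have hgint : IntegrableOn g (Ioc (0:ℝ) 1) := intOn_exp_log_Ioc.add hone
  have hderiv : ∀ t ∈ Ioo (0:ℝ) 1, HasDerivWithinAt f (g t) (Ioi t) t := by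
    intro t ht
    have h1 : HasDerivAt (fun t : ℝ => 1 - Real.exp (-t)) (Real.exp (-t)) t := by
      simpa [Pi.sub_def] using (hasDerivAt_const t (1:ℝ)).sub (hasDerivAt_exp_neg t)
    have := h1.mul (Real.hasDerivAt_log (ne_of_gt ht.1))
    refine HasDerivAt.hasDerivWithinAt (this.congr_deriv ?_)
    simp [hg]; field_simp
  have hcont : ContinuousOn f (Icc 0 1) := by
    intro x hx
    rcases eq_or_lt_of_le hx.1 with h | h
    · have : f 0 = 0 := by simp [hf]
      rw [← h]
      unfold ContinuousWithinAt
      rw [this]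
      refine cont_within_zero_aux (by simp [hf]) ?_
      filter_upwards [self_mem_nhdsWithin] with t (ht : t ∈ Ioi (0:ℝ))
      have h1 : 1 - Real.exp (-t) ≤ t := by linarith [Real.add_one_le_exp (-t)]
      have h2 : 0 ≤ 1 - Real.exp (-t) := by
        have := Real.exp_le_one_iff.2 (by linarith [mem_Ioi.1 ht] : -t ≤ 0); linarith
      calc |f t| = (1 - Real.exp (-t)) * |Real.log t| := by
            rw [hf, abs_mul, abs_of_nonneg h2]
        _ ≤ t * |Real.log t| := mul_le_mul_of_nonneg_right h1 (abs_nonneg _)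
        _ ≤ |Real.log t * t| := by rw [abs_mul, abs_of_pos (mem_Ioi.1 ht)]; ring_nf; exact le_refl _
    · refine ContinuousAt.continuousWithinAt ?_
      exact (((continuous_exp.comp continuous_neg).continuousAt.const_sub 1).mul
        (Real.continuousAt_log (ne_of_gt h)))
  have key := intervalIntegral.integral_eq_sub_of_hasDeriv_right_of_le zero_le_one hcont hderiv
    ((intervalIntegrable_iff_integrableOn_Ioc_of_le zero_le_one).2 hgint)
  have hf10 : f 1 - f 0 = 0 := by simp [hf]
  rw [hf10, intervalIntegral.integral_of_le zero_le_one] at key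
  have hsplit : ∫ t in Ioc (0:ℝ) 1, g t
      = (∫ t in Ioc (0:ℝ) 1, Real.exp (-t) * Real.log t)
        + ∫ t in Ioc (0:ℝ) 1, (1 - Real.exp (-t))/t :=
    integral_add intOn_exp_log_Ioc hone
  have hneg : ∫ t in Ioc (0:ℝ) 1, (1 - Real.exp (-t))/t
      = - ∫ v in Ioc (0:ℝ) 1, (Real.exp (-v) - 1)/v := by
    rw [← integral_neg]
    refine setIntegral_congr_fun measurableSet_Ioc (fun x hx => by ring)
  rw [hsplit, hneg] at key
  linarith

lemma tendsto_zero_within_Icc {f g : ℝ → ℝ} (hf0 : f 0 = 0)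
    (hb : ∀ᶠ x in nhdsWithin (0:ℝ) (Ioi 0), ‖f x‖ ≤ g x)
    (hg : Tendsto g (nhdsWithin (0:ℝ) (Ioi 0)) (nhds 0)) :
    Tendsto f (nhdsWithin (0:ℝ) (Icc 0 1)) (nhds 0) := by
  have hsub : Icc (0:ℝ) 1 ⊆ {0} ∪ Ioi 0 := by
    intro x hx; rcases eq_or_lt_of_le hx.1 with h | h
    · exact Or.inl (by simp [← h])
    · exact Or.inr h
  refine Tendsto.mono_left ?_ (nhdsWithin_mono 0 hsub)
  rw [nhdsWithin_union, tendsto_sup]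
  exact ⟨by rw [nhdsWithin_singleton]; simpa [hf0] using tendsto_pure_nhds f 0,
    squeeze_zero_norm' hb hg⟩

lemma one_sub_exp_neg_nonneg {x : ℝ} (hx : 0 ≤ x) : 0 ≤ 1 - Real.exp (-x) := by
  have := Real.exp_le_one_iff.2 (by linarith : -x ≤ 0); linarith

lemma one_sub_exp_neg_le {x : ℝ} : 1 - Real.exp (-x) ≤ x := by
  linarith [Real.add_one_le_exp (-x)]

lemma mul_exp_neg_le_one {x : ℝ} (hx : 0 ≤ x) : x * Real.exp (-x) ≤ 1 := by
  have h : x ≤ Real.exp x := by linarith [Real.add_one_le_exp x]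
  calc x * Real.exp (-x) ≤ Real.exp x * Real.exp (-x) :=
        mul_le_mul_of_nonneg_right h (Real.exp_pos _).le
    _ = 1 := by rw [← Real.exp_add]; simp

lemma hasDerivAt_main (u : ℝ) (hu : 0 < u) :
    HasDerivAt (fun u : ℝ => u * (1 - Real.exp (-(1/u))))
      ((1 - Real.exp (-(1/u))) - Real.exp (-(1/u))/u) u := by
  have h1 : HasDerivAt (fun u : ℝ => (1/u : ℝ)) (-(u^2)⁻¹) u := by
    simpa using hasDerivAt_inv (ne_of_gt hu)
  have h2 := (hasDerivAt_exp_neg (1/u)).comp u h1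
  have hinner := (hasDerivAt_const u (1:ℝ)).sub h2
  have := (hasDerivAt_id u).mul hinner
  refine this.congr_deriv ?_
  simp only [Pi.sub_apply, Function.comp_apply, id]
  field_simp
  ring

lemma contOn_inv_stuff {s : Set ℝ} (hs : ∀ x ∈ s, x ≠ 0) :
    ContinuousOn (fun u : ℝ => Real.exp (-(1/u))) s :=
  (continuous_exp.comp continuous_neg).comp_continuousOn
    (continuousOn_const.div continuousOn_id hs)

lemma intOn_A : IntegrableOn (fun u : ℝ => 1 - Real.exp (-(1/u))) (Ioc (0:ℝ) 1) := by
  refine integrableOn_of_bddOn measurableSet_Ioc measure_Ioc_lt_top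
    (continuousOn_const.sub (contOn_inv_stuff (fun x hx => ne_of_gt hx.1))) (C := 1) ?_
  intro u hu
  have hu0 := hu.1
  have h1 : (0:ℝ) ≤ 1/u := by positivity
  rw [abs_of_nonneg (one_sub_exp_neg_nonneg h1)]
  linarith [Real.exp_pos (-(1/u))]

lemma intOn_expinv_div_Ioc : IntegrableOn (fun u : ℝ => Real.exp (-(1/u))/u) (Ioc (0:ℝ) 1) := by
  refine integrableOn_of_bddOn measurableSet_Ioc measure_Ioc_lt_top
    ((contOn_inv_stuff (fun x hx => ne_of_gt hx.1)).div continuousOn_id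
      (fun x hx => ne_of_gt hx.1)) (C := 1) ?_
  intro u hu
  have hu0 := hu.1
  have h1 : (0:ℝ) ≤ 1/u := by positivity
  rw [abs_of_nonneg (by positivity)]
  have := mul_exp_neg_le_one h1
  rw [div_le_one hu0]
  calc Real.exp (-(1/u)) = u * ((1/u) * Real.exp (-(1/u))) := by field_simp
    _ ≤ u * 1 := mul_le_mul_of_nonneg_left this hu0.le
    _ = u := mul_one u

lemma ibpA : ∫ u in Ioc (0:ℝ) 1, (1 - Real.exp (-(1/u)))
    = (1 - Real.exp (-1)) + ∫ u in Ioc (0:ℝ) 1, Real.exp (-(1/u))/u := by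
  set f : ℝ → ℝ := fun u => u * (1 - Real.exp (-(1/u))) with hf
  have hgint : IntegrableOn
      (fun u => (1 - Real.exp (-(1/u))) - Real.exp (-(1/u))/u) (Ioc (0:ℝ) 1) :=
    intOn_A.sub intOn_expinv_div_Ioc
  have hderiv : ∀ u ∈ Ioo (0:ℝ) 1, HasDerivWithinAt f
      ((1 - Real.exp (-(1/u))) - Real.exp (-(1/u))/u) (Ioi u) u :=
    fun u hu => (hasDerivAt_main u hu.1).hasDerivWithinAt
  have hcont : ContinuousOn f (Icc 0 1) := by
    intro x hx
    rcases eq_or_lt_of_le hx.1 with h | h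
    · rw [← h]
      have hf0 : f 0 = 0 := by simp [hf]
      unfold ContinuousWithinAt
      rw [hf0]
      refine tendsto_zero_within_Icc (g := fun u => u) hf0 ?_ ?_
      · filter_upwards [self_mem_nhdsWithin] with u (hu : u ∈ Ioi (0:ℝ))
        have hu0 : (0:ℝ) < u := hu
        have h1 : (0:ℝ) ≤ 1/u := by positivity
        rw [Real.norm_eq_abs, hf, abs_mul, abs_of_pos hu0]
        have := one_sub_exp_neg_nonneg h1
        have h2 : 1 - Real.exp (-(1/u)) ≤ 1 := by linarith [Real.exp_pos (-(1/u))]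
        calc u * |1 - Real.exp (-(1/u))| ≤ u * 1 := by
              rw [abs_of_nonneg this]; exact mul_le_mul_of_nonneg_left h2 hu0.le
          _ = u := mul_one u
      · have : Tendsto (fun u : ℝ => u) (nhdsWithin (0:ℝ) (Ioi 0)) (nhds 0) :=
          tendsto_nhdsWithin_of_tendsto_nhds tendsto_id
        simpa using this
    · refine ContinuousAt.continuousWithinAt ?_
      have h1 : ContinuousAt (fun u : ℝ => (1/u : ℝ)) x :=
        continuousAt_const.div continuousAt_id (ne_of_gt h)
      exact continuousAt_id.mul (continuousAt_const.sub
        ((continuous_exp.continuousAt).comp h1.neg))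
  have key := intervalIntegral.integral_eq_sub_of_hasDeriv_right_of_le zero_le_one hcont hderiv
    ((intervalIntegrable_iff_integrableOn_Ioc_of_le zero_le_one).2 hgint)
  rw [intervalIntegral.integral_of_le zero_le_one] at key
  have hval : f 1 - f 0 = 1 - Real.exp (-1) := by norm_num [hf]
  rw [hval, integral_sub intOn_A intOn_expinv_div_Ioc] at key
  linarith

lemma intOn_B : IntegrableOn (fun u : ℝ => 1 - Real.exp (-(1/u)) - 1/u) (Ioi (1:ℝ)) := by
  have hbd : IntegrableOn (fun u : ℝ => (u:ℝ)^(-2:ℝ)) (Ioi (1:ℝ)) :=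
    integrableOn_Ioi_rpow_of_lt (by norm_num) one_pos
  refine Integrable.mono' hbd ?_ ?_
  · exact ((continuousOn_const.sub (contOn_inv_stuff
      (fun x hx => ne_of_gt (lt_trans one_pos hx)))).sub
      (continuousOn_const.div continuousOn_id
        (fun x hx => ne_of_gt (lt_trans one_pos hx)))).aestronglyMeasurable measurableSet_Ioi
  · filter_upwards [ae_restrict_mem measurableSet_Ioi] with u hu
    have hu1 : (1:ℝ) < u := hu
    have hu0 : (0:ℝ) < u := lt_trans one_pos hu1
    have h1 : (0:ℝ) ≤ 1/u := by positivity
    have hup : Real.exp (-(1/u)) ≤ 1 - 1/u + (1/u)^2/2 := exp_neg_le_quadratic h1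
    have hlo : 1 - 1/u ≤ Real.exp (-(1/u)) := by linarith [Real.add_one_le_exp (-(1/u))]
    have habs : |1 - Real.exp (-(1/u)) - 1/u| ≤ (1/u)^2/2 := by
      rw [abs_le]; constructor <;> nlinarith
    have hr : (u:ℝ)^(-2:ℝ) = (1/u)^2 := by
      rw [Real.rpow_neg hu0.le, Real.rpow_two]
      field_simp
    rw [Real.norm_eq_abs, hr]
    nlinarith [sq_nonneg (1/u)]

lemma intOn_expinvm1_div_Ioi :
    IntegrableOn (fun u : ℝ => (Real.exp (-(1/u)) - 1)/u) (Ioi (1:ℝ)) := by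
  have hbd : IntegrableOn (fun u : ℝ => (u:ℝ)^(-2:ℝ)) (Ioi (1:ℝ)) :=
    integrableOn_Ioi_rpow_of_lt (by norm_num) one_pos
  refine Integrable.mono' hbd ?_ ?_
  · exact (((contOn_inv_stuff (fun x hx => ne_of_gt (lt_trans one_pos hx))).sub
      continuousOn_const).div continuousOn_id
        (fun x hx => ne_of_gt (lt_trans one_pos hx))).aestronglyMeasurable measurableSet_Ioi
  · filter_upwards [ae_restrict_mem measurableSet_Ioi] with u hu
    have hu1 : (1:ℝ) < u := hu
    have hu0 : (0:ℝ) < u := lt_trans one_pos hu1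
    have h1 : (0:ℝ) ≤ 1/u := by positivity
    have h2 : |Real.exp (-(1/u)) - 1| ≤ 1/u := by
      rw [abs_of_nonpos (by linarith [one_sub_exp_neg_nonneg h1])]
      linarith [one_sub_exp_neg_le (x := 1/u)]
    have hr : (u:ℝ)^(-2:ℝ) = 1/u * (1/u) := by
      rw [Real.rpow_neg hu0.le, Real.rpow_two]
      field_simp
    rw [Real.norm_eq_abs, abs_div, abs_of_pos hu0, hr, div_le_iff₀ hu0]
    calc |Real.exp (-(1/u)) - 1| ≤ 1/u := h2
      _ = 1/u * (1/u) * u := by field_simp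
    
lemma tendsto_f_atTop : Tendsto (fun u : ℝ => u * (1 - Real.exp (-(1/u)))) atTop (nhds 1) := by
  have hd : HasDerivAt (fun x : ℝ => 1 - Real.exp (-x)) 1 0 := by
    simpa [Pi.sub_def] using ((hasDerivAt_const (0:ℝ) (1:ℝ)).sub (hasDerivAt_exp_neg 0))
  have hslope := hasDerivAt_iff_tendsto_slope.1 hd
  have hcomp : Tendsto (fun u : ℝ => (u:ℝ)⁻¹) atTop (nhdsWithin 0 ({0}ᶜ)) :=
    tendsto_inv_atTop_nhdsGT_zero.mono_right (nhdsWithin_mono 0 (fun x hx => ne_of_gt hx))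
  have := hslope.comp hcomp
  refine Tendsto.congr' ?_ this
  filter_upwards [eventually_gt_atTop (0:ℝ)] with u hu
  show slope (fun x : ℝ => 1 - Real.exp (-x)) 0 u⁻¹ = u * (1 - Real.exp (-(1/u)))
  rw [slope_def_field, one_div]
  field_simp
  simp

lemma ibpB : ∫ u in Ioi (1:ℝ), (1 - Real.exp (-(1/u)) - 1/u)
    = Real.exp (-1) + ∫ u in Ioi (1:ℝ), (Real.exp (-(1/u)) - 1)/u := by
  set f : ℝ → ℝ := fun u => u * (1 - Real.exp (-(1/u))) with hf
  have hderiv : ∀ u ∈ Ici (1:ℝ), HasDerivAt f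
      ((1 - Real.exp (-(1/u)) - 1/u) - (Real.exp (-(1/u)) - 1)/u) u := by
    intro u hu
    have hu0 : (0:ℝ) < u := lt_of_lt_of_le one_pos hu
    refine (hasDerivAt_main u hu0).congr_deriv ?_
    field_simp
    ring
  have hint : IntegrableOn
      (fun u => (1 - Real.exp (-(1/u)) - 1/u) - (Real.exp (-(1/u)) - 1)/u) (Ioi 1) :=
    intOn_B.sub intOn_expinvm1_div_Ioi
  have key := integral_Ioi_of_hasDerivAt_of_tendsto' hderiv hint tendsto_f_atTop
  rw [integral_sub intOn_B intOn_expinvm1_div_Ioi] at key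
  have hval : f 1 = 1 - Real.exp (-1) := by norm_num [hf]
  rw [hval] at key
  linarith

lemma intOn_texp : IntegrableOn (fun t : ℝ => Real.exp (-t) * t) (Ioi (1:ℝ)) := by
  have h := Real.GammaIntegral_convergent (by norm_num : (0:ℝ) < 2)
  have h2 : IntegrableOn (fun x : ℝ => Real.exp (-x) * x ^ ((2:ℝ) - 1)) (Ioi 1) :=
    h.mono_set (Ioi_subset_Ioi zero_le_one)
  refine h2.congr_fun (fun x hx => ?_) measurableSet_Ioi
  norm_num [Real.rpow_one]

lemma intOn_exp_div_Ioi : IntegrableOn (fun t : ℝ => Real.exp (-t)/t) (Ioi (1:ℝ)) := by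
  refine Integrable.mono' (g := fun t => Real.exp (-t)) ?_ ?_ ?_
  · simpa [IntegrableOn] using exp_neg_integrableOn_Ioi 1 one_pos
  · exact ((continuous_exp.comp continuous_neg).continuousOn.div continuousOn_id
      (fun x hx => ne_of_gt (lt_trans one_pos hx))).aestronglyMeasurable measurableSet_Ioi
  · filter_upwards [ae_restrict_mem measurableSet_Ioi] with t ht
    have ht1 : 1 < t := ht
    rw [Real.norm_eq_abs, abs_div, abs_of_pos (Real.exp_pos _), abs_of_pos (by linarith)]
    rw [div_le_iff₀ (by linarith)]
    nlinarith [Real.exp_pos (-t)]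

lemma intOn_exp_log_Ioi : IntegrableOn (fun t : ℝ => Real.exp (-t) * Real.log t) (Ioi (1:ℝ)) := by
  refine Integrable.mono' intOn_texp ?_ ?_
  · exact ((continuous_exp.comp continuous_neg).continuousOn.mul
      (continuousOn_log.mono (fun x hx => ne_of_gt (lt_trans one_pos hx)))).aestronglyMeasurable
      measurableSet_Ioi
  · filter_upwards [ae_restrict_mem measurableSet_Ioi] with t ht
    have ht1 : 1 < t := ht
    have hlog : 0 ≤ Real.log t := Real.log_nonneg ht1.le
    rw [Real.norm_eq_abs, abs_mul, abs_of_pos (Real.exp_pos _), abs_of_nonneg hlog]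
    have : Real.log t ≤ t := (Real.log_le_sub_one_of_pos (by linarith)).trans (by linarith)
    nlinarith [Real.exp_pos (-t)]

lemma ibp2 : ∫ t in Ioi (1:ℝ), Real.exp (-t) * Real.log t = ∫ t in Ioi (1:ℝ), Real.exp (-t)/t := by
  set f : ℝ → ℝ := fun t => -(Real.exp (-t) * Real.log t) with hfdef
  have hderiv : ∀ t ∈ Ici (1:ℝ), HasDerivAt f
      (Real.exp (-t) * Real.log t - Real.exp (-t)/t) t := by
    intro t ht
    have ht0 : (0:ℝ) < t := lt_of_lt_of_le one_pos ht
    have := ((hasDerivAt_exp_neg t).mul (Real.hasDerivAt_log (ne_of_gt ht0))).neg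
    refine this.congr_deriv ?_
    field_simp
    ring
  have hint : IntegrableOn (fun t => Real.exp (-t) * Real.log t - Real.exp (-t)/t) (Ioi 1) :=
    intOn_exp_log_Ioi.sub intOn_exp_div_Ioi
  have hlim : Tendsto f atTop (nhds 0) := by
    have hb : ∀ᶠ t in atTop, ‖f t‖ ≤ t ^ 2 * Real.exp (-t) := by
      filter_upwards [eventually_ge_atTop (1:ℝ)] with t ht
      have hlog : 0 ≤ Real.log t := Real.log_nonneg ht
      have : Real.log t ≤ t := (Real.log_le_sub_one_of_pos (by linarith)).trans (by linarith)
      rw [hfdef, Real.norm_eq_abs, abs_neg, abs_mul, abs_of_pos (Real.exp_pos _),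
        abs_of_nonneg hlog, pow_two]
      have h1 : Real.exp (-t) * Real.log t ≤ Real.exp (-t) * t :=
        mul_le_mul_of_nonneg_left this (Real.exp_pos _).le
      have h2 : 0 ≤ Real.exp (-t) * t * (t - 1) :=
        mul_nonneg (mul_nonneg (Real.exp_pos _).le (by linarith)) (by linarith)
      nlinarith [h1, h2]
    exact squeeze_zero_norm' hb (tendsto_pow_mul_exp_neg_atTop_nhds_zero 2)
  have key := integral_Ioi_of_hasDerivAt_of_tendsto' hderiv hint hlim
  have hsplit : ∫ t in Ioi (1:ℝ), (Real.exp (-t) * Real.log t - Real.exp (-t)/t)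
      = (∫ t in Ioi (1:ℝ), Real.exp (-t) * Real.log t) - ∫ t in Ioi (1:ℝ), Real.exp (-t)/t :=
    integral_sub intOn_exp_log_Ioi intOn_exp_div_Ioi
  rw [hsplit] at key
  have : f 1 = 0 := by simp [hfdef]
  rw [this] at key
  linarith

lemma inv_image_Ioi : (fun x : ℝ => x⁻¹) '' Ioi 1 = Ioo 0 1 := by
  ext u
  constructor
  · rintro ⟨x, hx, rfl⟩
    have hx1 : (1:ℝ) < x := hx
    exact ⟨inv_pos.2 (lt_trans one_pos hx1), inv_lt_one_of_one_lt₀ hx1⟩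
  · rintro ⟨hu0, hu1⟩
    exact ⟨u⁻¹, one_lt_inv_iff₀.2 ⟨hu0, hu1⟩ |>.gt.le.lt_of_ne' (by
      intro h; exact absurd h.symm (ne_of_lt (one_lt_inv_iff₀.2 ⟨hu0, hu1⟩))) |>.gt, inv_inv u⟩

lemma inv_image_Ioo : (fun x : ℝ => x⁻¹) '' Ioo 0 1 = Ioi 1 := by
  ext u
  constructor
  · rintro ⟨x, hx, rfl⟩
    exact one_lt_inv_iff₀.2 ⟨hx.1, hx.2⟩
  · intro hu
    have hu1 : (1:ℝ) < u := hu
    exact ⟨u⁻¹, ⟨inv_pos.2 (lt_trans one_pos hu1), inv_lt_one_of_one_lt₀ hu1⟩, inv_inv u⟩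

lemma hasDerivWithin_inv_on {s : Set ℝ} (hs : ∀ x ∈ s, x ≠ 0) :
    ∀ x ∈ s, HasDerivWithinAt (fun x : ℝ => x⁻¹) (-((x:ℝ)^2)⁻¹) s x :=
  fun x hx => (hasDerivAt_inv (hs x hx)).hasDerivWithinAt

lemma sub1 : ∫ u in Ioc (0:ℝ) 1, Real.exp (-(1/u))/u = ∫ t in Ioi (1:ℝ), Real.exp (-t)/t := by
  rw [integral_Ioc_eq_integral_Ioo, ← inv_image_Ioi]
  rw [integral_image_eq_integral_abs_deriv_smul measurableSet_Ioi
    (hasDerivWithin_inv_on (fun x hx => ne_of_gt (lt_trans one_pos hx)))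
    (fun a _ b _ h => inv_injective h) (fun u => Real.exp (-(1/u))/u)]
  refine setIntegral_congr_fun measurableSet_Ioi (fun x hx => ?_)
  have hx0 : (0:ℝ) < x := lt_trans one_pos hx
  have : (1:ℝ)/x⁻¹ = x := by field_simp
  rw [smul_eq_mul, abs_neg, abs_inv, abs_of_pos (by positivity : (0:ℝ) < x^2), this]
  field_simp

lemma sub2 : ∫ u in Ioi (1:ℝ), (Real.exp (-(1/u)) - 1)/u
    = ∫ v in Ioc (0:ℝ) 1, (Real.exp (-v) - 1)/v := by
  rw [integral_Ioc_eq_integral_Ioo (f := fun v => (Real.exp (-v) - 1)/v), ← inv_image_Ioo]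
  rw [integral_image_eq_integral_abs_deriv_smul measurableSet_Ioo
    (hasDerivWithin_inv_on (fun x hx => ne_of_gt hx.1))
    (fun a _ b _ h => inv_injective h) (fun u => (Real.exp (-(1/u)) - 1)/u)]
  refine setIntegral_congr_fun measurableSet_Ioo (fun x hx => ?_)
  have hx0 : (0:ℝ) < x := hx.1
  have : (1:ℝ)/x⁻¹ = x := by field_simp
  rw [smul_eq_mul, abs_neg, abs_inv, abs_of_pos (by positivity : (0:ℝ) < x^2), this]
  field_simp

lemma CplusD : (∫ v in Ioc (0:ℝ) 1, (Real.exp (-v) - 1)/v) + (∫ t in Ioi (1:ℝ), Real.exp (-t)/t)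
    = -Real.eulerMascheroniConstant := by
  have hsplit : ∫ t in Ioi (0:ℝ), Real.exp (-t) * Real.log t
      = (∫ t in Ioc (0:ℝ) 1, Real.exp (-t) * Real.log t)
        + ∫ t in Ioi (1:ℝ), Real.exp (-t) * Real.log t := by
    rw [← Ioc_union_Ioi_eq_Ioi zero_le_one]
    exact setIntegral_union (Ioc_disjoint_Ioi le_rfl) measurableSet_Ioi
      intOn_exp_log_Ioc intOn_exp_log_Ioi
  rw [← ibp1, ← ibp2, ← hsplit, gamma_integral_repr]

lemma keyConst : (∫ u in Ioc (0:ℝ) 1, (1 - Real.exp (-(1/u))))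
    + (∫ u in Ioi (1:ℝ), (1 - Real.exp (-(1/u)) - 1/u))
    + (∫ v in Ioc (0:ℝ) 1, (Real.exp (-v) - 1)/v)
    + (∫ t in Ioi (1:ℝ), Real.exp (-t)/t)
    = 1 - 2 * Real.eulerMascheroniConstant := by
  have h := CplusD
  rw [ibpA, ibpB, sub1, sub2]
  linarith

lemma exp_neg_mul_le_one {r u : ℝ} (hr : 0 ≤ r) (hu : 0 ≤ u) : Real.exp (-(r*u)) ≤ 1 :=
  Real.exp_le_one_iff.2 (by nlinarith)

lemma tendsto_exp_neg_mul (u : ℝ) :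
    Tendsto (fun r : ℝ => Real.exp (-(r*u))) (nhdsWithin 0 (Ioi 0)) (nhds 1) := by
  have : Continuous (fun r : ℝ => Real.exp (-(r*u))) := by fun_prop
  have h : Tendsto (fun r : ℝ => Real.exp (-(r*u))) (nhds 0) (nhds (Real.exp (-(0*u)))) :=
    this.tendsto 0
  simp only [zero_mul, neg_zero, Real.exp_zero] at h
  exact h.mono_left nhdsWithin_le_nhds

lemma T1 : Tendsto (fun r : ℝ => ∫ u in Ioc (0:ℝ) 1, Real.exp (-(r*u)) * (1 - Real.exp (-(1/u))))
    (nhdsWithin 0 (Ioi 0)) (nhds (∫ u in Ioc (0:ℝ) 1, (1 - Real.exp (-(1/u))))) := by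
  refine tendsto_integral_filter_of_dominated_convergence (fun _ => (1:ℝ)) ?_ ?_ ?_ ?_
  · filter_upwards with r
    refine (ContinuousOn.mul (by fun_prop) (continuousOn_const.sub
      (contOn_inv_stuff (fun x hx => ne_of_gt hx.1)))).aestronglyMeasurable measurableSet_Ioc
  · filter_upwards [self_mem_nhdsWithin] with r (hr : r ∈ Ioi (0:ℝ))
    filter_upwards [ae_restrict_mem measurableSet_Ioc] with u hu
    have hu0 := hu.1
    have h1 : (0:ℝ) ≤ 1/u := by positivity
    have h2 := one_sub_exp_neg_nonneg h1
    have h3 : 1 - Real.exp (-(1/u)) ≤ 1 := by linarith [Real.exp_pos (-(1/u))]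
    rw [Real.norm_eq_abs, abs_mul, abs_of_pos (Real.exp_pos _), abs_of_nonneg h2]
    calc Real.exp (-(r*u)) * (1 - Real.exp (-(1/u))) ≤ 1 * 1 := by
          refine mul_le_mul (exp_neg_mul_le_one (le_of_lt hr) hu.1.le) h3 h2 zero_le_one
      _ = 1 := mul_one 1
  · exact integrableOn_const measure_Ioc_lt_top.ne
  · filter_upwards [ae_restrict_mem measurableSet_Ioc] with u hu
    simpa using (tendsto_exp_neg_mul u).mul_const (1 - Real.exp (-(1/u)))

lemma T2 : Tendsto (fun r : ℝ =>
      ∫ u in Ioi (1:ℝ), Real.exp (-(r*u)) * (1 - Real.exp (-(1/u)) - 1/u))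
    (nhdsWithin 0 (Ioi 0)) (nhds (∫ u in Ioi (1:ℝ), (1 - Real.exp (-(1/u)) - 1/u))) := by
  have hbd : IntegrableOn (fun u : ℝ => (u:ℝ)^(-2:ℝ)) (Ioi (1:ℝ)) :=
    integrableOn_Ioi_rpow_of_lt (by norm_num) one_pos
  have habs : ∀ u : ℝ, u ∈ Ioi (1:ℝ) → |1 - Real.exp (-(1/u)) - 1/u| ≤ (u:ℝ)^(-2:ℝ) := by
    intro u hu
    have hu1 : (1:ℝ) < u := hu
    have hu0 : (0:ℝ) < u := lt_trans one_pos hu1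
    have h1 : (0:ℝ) ≤ 1/u := by positivity
    have hup := exp_neg_le_quadratic h1
    have hlo : 1 - 1/u ≤ Real.exp (-(1/u)) := by linarith [Real.add_one_le_exp (-(1/u))]
    have hr : (u:ℝ)^(-2:ℝ) = (1/u)^2 := by
      rw [Real.rpow_neg hu0.le, Real.rpow_two]; field_simp
    rw [hr, abs_le]
    constructor <;> nlinarith [sq_nonneg (1/u)]
  refine tendsto_integral_filter_of_dominated_convergence (fun u => (u:ℝ)^(-2:ℝ)) ?_ ?_ hbd ?_
  · filter_upwards with r
    refine (ContinuousOn.mul (by fun_prop) ((continuousOn_const.sub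
      (contOn_inv_stuff (fun x hx => ne_of_gt (lt_trans one_pos hx)))).sub
      (continuousOn_const.div continuousOn_id
        (fun x hx => ne_of_gt (lt_trans one_pos hx))))).aestronglyMeasurable measurableSet_Ioi
  · filter_upwards [self_mem_nhdsWithin] with r (hr : r ∈ Ioi (0:ℝ))
    filter_upwards [ae_restrict_mem measurableSet_Ioi] with u hu
    have hu0 : (0:ℝ) < u := lt_trans one_pos hu
    rw [Real.norm_eq_abs, abs_mul, abs_of_pos (Real.exp_pos _)]
    calc Real.exp (-(r*u)) * |1 - Real.exp (-(1/u)) - 1/u|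
        ≤ 1 * ((u:ℝ)^(-2:ℝ)) :=
          mul_le_mul (exp_neg_mul_le_one (le_of_lt hr) hu0.le) (habs u hu) (abs_nonneg _)
            zero_le_one
      _ = (u:ℝ)^(-2:ℝ) := one_mul _
  · filter_upwards [ae_restrict_mem measurableSet_Ioi] with u hu
    simpa using (tendsto_exp_neg_mul u).mul_const (1 - Real.exp (-(1/u)) - 1/u)

lemma T3 : Tendsto (fun r : ℝ =>
      ∫ v in Ioc (0:ℝ) 1, (Ioi r).indicator (fun v => (Real.exp (-v) - 1)/v) v)
    (nhdsWithin 0 (Ioi 0)) (nhds (∫ v in Ioc (0:ℝ) 1, (Real.exp (-v) - 1)/v)) := by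
  have hmeas : AEStronglyMeasurable (fun v : ℝ => (Real.exp (-v) - 1)/v)
      (volume.restrict (Ioc (0:ℝ) 1)) := by
    refine (ContinuousOn.div ((by fun_prop : ContinuousOn (fun v : ℝ => Real.exp (-v)) _).sub
      continuousOn_const) continuousOn_id
      (fun x hx => ne_of_gt hx.1)).aestronglyMeasurable measurableSet_Ioc
  have habs : ∀ v : ℝ, v ∈ Ioc (0:ℝ) 1 → |(Real.exp (-v) - 1)/v| ≤ 1 := by
    intro v hv
    rw [abs_div, abs_of_pos hv.1,
      abs_of_nonpos (by linarith [one_sub_exp_neg_nonneg hv.1.le] : Real.exp (-v) - 1 ≤ 0),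
      div_le_one hv.1]
    linarith [one_sub_exp_neg_le (x := v)]
  refine tendsto_integral_filter_of_dominated_convergence (fun _ => (1:ℝ)) ?_ ?_ ?_ ?_
  · filter_upwards with r
    exact hmeas.indicator measurableSet_Ioi
  · filter_upwards with r
    filter_upwards [ae_restrict_mem measurableSet_Ioc] with v hv
    rw [Real.norm_eq_abs]
    by_cases h : v ∈ Ioi r
    · rw [indicator_of_mem h]; exact habs v hv
    · rw [indicator_of_notMem h]; simp
  · exact integrableOn_const measure_Ioc_lt_top.ne
  · filter_upwards [ae_restrict_mem measurableSet_Ioc] with v hv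
    have : ∀ᶠ r in nhdsWithin (0:ℝ) (Ioi 0),
        (Ioi r).indicator (fun v => (Real.exp (-v) - 1)/v) v = (Real.exp (-v) - 1)/v := by
      filter_upwards [mem_nhdsWithin_of_mem_nhds (Iio_mem_nhds hv.1)] with r (hr : r < v)
      exact indicator_of_mem hr _
    refine Tendsto.congr' ?_ tendsto_const_nhds
    filter_upwards [this] with r hr using hr.symm

lemma intOn_exp_neg_mul_Ioi {r a : ℝ} (hr : 0 < r) :
    IntegrableOn (fun u : ℝ => Real.exp (-(r*u))) (Ioi a) := by
  have := exp_neg_integrableOn_Ioi a hr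
  refine this.congr_fun (fun x _ => by ring_nf) measurableSet_Ioi

lemma E1 {r : ℝ} (hr : 0 < r) :
    (1 - ∫ t in Ioi (0:ℝ), Real.exp (-(t + r/t)))
      = r * ∫ u in Ioi (0:ℝ), Real.exp (-(r*u)) * (1 - Real.exp (-(1/u))) := by
  have hmain : IntegrableOn (fun t : ℝ => Real.exp (-(t + r/t))) (Ioi 0) := by
    refine Integrable.mono' (g := fun t => Real.exp (-t)) ?_ ?_ ?_
    · simpa [IntegrableOn] using exp_neg_integrableOn_Ioi 0 one_pos
    · refine (ContinuousOn.rexp ?_).aestronglyMeasurable measurableSet_Ioi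
      exact (continuousOn_id.add (continuousOn_const.div continuousOn_id
        (fun x hx => ne_of_gt hx))).neg
    · filter_upwards [ae_restrict_mem measurableSet_Ioi] with t ht
      have ht0 : (0:ℝ) < t := ht
      rw [Real.norm_eq_abs, abs_of_pos (Real.exp_pos _)]
      refine Real.exp_le_exp.2 ?_
      have : 0 ≤ r/t := by positivity
      linarith
  have hexp : IntegrableOn (fun t : ℝ => Real.exp (-t)) (Ioi 0) := by
    simpa using exp_neg_integrableOn_Ioi 0 one_pos
  have h1 : (1:ℝ) - ∫ t in Ioi (0:ℝ), Real.exp (-(t + r/t))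
      = ∫ t in Ioi (0:ℝ), (Real.exp (-t) - Real.exp (-(t + r/t))) := by
    rw [integral_sub hexp hmain, integral_exp_neg_Ioi_zero]
  have h2 : ∫ t in Ioi (0:ℝ), (Real.exp (-t) - Real.exp (-(t + r/t)))
      = ∫ t in Ioi (0:ℝ), Real.exp (-t) * (1 - Real.exp (-(r/t))) := by
    refine setIntegral_congr_fun measurableSet_Ioi (fun t ht => ?_)
    have : Real.exp (-(t + r/t)) = Real.exp (-t) * Real.exp (-(r/t)) := by
      rw [← Real.exp_add]; ring_nf
    rw [this]; ring
  have hs := integral_comp_mul_left_Ioi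
    (fun t => Real.exp (-t) * (1 - Real.exp (-(r/t)))) 0 hr
  rw [mul_zero] at hs
  have h3 : ∫ u in Ioi (0:ℝ), Real.exp (-(r*u)) * (1 - Real.exp (-(r/(r*u))))
      = r⁻¹ • ∫ t in Ioi (0:ℝ), Real.exp (-t) * (1 - Real.exp (-(r/t))) := hs
  have h4 : ∫ u in Ioi (0:ℝ), Real.exp (-(r*u)) * (1 - Real.exp (-(r/(r*u))))
      = ∫ u in Ioi (0:ℝ), Real.exp (-(r*u)) * (1 - Real.exp (-(1/u))) := by
    refine setIntegral_congr_fun measurableSet_Ioi (fun u hu => ?_)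
    have hu0 : (0:ℝ) < u := hu
    have : r/(r*u) = 1/u := by
      rw [div_eq_div_iff (by positivity) (by positivity)]
      ring
    rw [this]
  rw [h1, h2, ← h4, h3, smul_eq_mul]
  field_simp

lemma Ioi_inter_Ioc {r : ℝ} (hr : 0 < r) : Ioi r ∩ Ioc (0:ℝ) 1 = Ioc r 1 := by
  ext x
  constructor
  · rintro ⟨h1, _, h3⟩; exact ⟨h1, h3⟩
  · rintro ⟨h1, h2⟩; exact ⟨h1, lt_trans hr h1, h2⟩

lemma E2 {r : ℝ} (hr : r ∈ Ioo (0:ℝ) 1) :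
    ∫ u in Ioi (0:ℝ), Real.exp (-(r*u)) * (1 - Real.exp (-(1/u)))
      = (∫ u in Ioc (0:ℝ) 1, Real.exp (-(r*u)) * (1 - Real.exp (-(1/u))))
        + (∫ u in Ioi (1:ℝ), Real.exp (-(r*u)) * (1 - Real.exp (-(1/u)) - 1/u))
        + (∫ v in Ioc (0:ℝ) 1, (Ioi r).indicator (fun v => (Real.exp (-v) - 1)/v) v)
        + (∫ t in Ioi (1:ℝ), Real.exp (-t)/t) - Real.log r := by
  obtain ⟨hr0, hr1⟩ := hr
  -- integrabilities
  have iA : IntegrableOn (fun u : ℝ => Real.exp (-(r*u)) * (1 - Real.exp (-(1/u))))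
      (Ioc (0:ℝ) 1) := by
    refine integrableOn_of_bddOn measurableSet_Ioc measure_Ioc_lt_top ?_ (C := 1) ?_
    · exact (by fun_prop : ContinuousOn (fun u : ℝ => Real.exp (-(r*u))) _).mul
        (continuousOn_const.sub (contOn_inv_stuff (fun x hx => ne_of_gt hx.1)))
    · intro u hu
      have hu0 := hu.1
      have h1 : (0:ℝ) ≤ 1/u := le_of_lt (by positivity)
      have h2 := one_sub_exp_neg_nonneg h1
      have h3 : 1 - Real.exp (-(1/u)) ≤ 1 := by linarith [Real.exp_pos (-(1/u))]
      rw [abs_mul, abs_of_pos (Real.exp_pos _), abs_of_nonneg h2]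
      calc Real.exp (-(r*u)) * (1 - Real.exp (-(1/u))) ≤ 1 * 1 :=
            mul_le_mul (exp_neg_mul_le_one hr0.le hu.1.le) h3 h2 zero_le_one
        _ = 1 := mul_one 1
  have iB1 : IntegrableOn (fun u : ℝ => Real.exp (-(r*u)) * (1 - Real.exp (-(1/u)) - 1/u))
      (Ioi (1:ℝ)) := by
    have hbd : IntegrableOn (fun u : ℝ => (u:ℝ)^(-2:ℝ)) (Ioi (1:ℝ)) :=
      integrableOn_Ioi_rpow_of_lt (by norm_num) one_pos
    refine Integrable.mono' hbd ?_ ?_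
    · exact ((by fun_prop : ContinuousOn (fun u : ℝ => Real.exp (-(r*u))) _).mul
        ((continuousOn_const.sub (contOn_inv_stuff
          (fun x hx => ne_of_gt (lt_trans one_pos hx)))).sub
          (continuousOn_const.div continuousOn_id
            (fun x hx => ne_of_gt (lt_trans one_pos hx))))).aestronglyMeasurable
          measurableSet_Ioi
    · filter_upwards [ae_restrict_mem measurableSet_Ioi] with u hu
      have hu1 : (1:ℝ) < u := hu
      have hu0 : (0:ℝ) < u := lt_trans one_pos hu1
      have h1 : (0:ℝ) ≤ 1/u := by positivity
      have hup := exp_neg_le_quadratic h1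
      have hlo : 1 - 1/u ≤ Real.exp (-(1/u)) := by linarith [Real.add_one_le_exp (-(1/u))]
      have hrw : (u:ℝ)^(-2:ℝ) = (1/u)^2 := by
        rw [Real.rpow_neg hu0.le, Real.rpow_two]; field_simp
      have habs : |1 - Real.exp (-(1/u)) - 1/u| ≤ (u:ℝ)^(-2:ℝ) := by
        rw [hrw, abs_le]; constructor <;> nlinarith [sq_nonneg (1/u)]
      rw [Real.norm_eq_abs, abs_mul, abs_of_pos (Real.exp_pos _)]
      calc Real.exp (-(r*u)) * |1 - Real.exp (-(1/u)) - 1/u| ≤ 1 * ((u:ℝ)^(-2:ℝ)) :=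
            mul_le_mul (exp_neg_mul_le_one hr0.le hu0.le) habs (abs_nonneg _) zero_le_one
        _ = (u:ℝ)^(-2:ℝ) := one_mul _
  have iB2 : IntegrableOn (fun u : ℝ => Real.exp (-(r*u)) * (1/u)) (Ioi (1:ℝ)) := by
    refine Integrable.mono' (intOn_exp_neg_mul_Ioi hr0 (a := 1)) ?_ ?_
    · exact ((by fun_prop : ContinuousOn (fun u : ℝ => Real.exp (-(r*u))) _).mul
        (continuousOn_const.div continuousOn_id
          (fun x hx => ne_of_gt (lt_trans one_pos hx)))).aestronglyMeasurable measurableSet_Ioi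
    · filter_upwards [ae_restrict_mem measurableSet_Ioi] with u hu
      have hu0 : (0:ℝ) < u := lt_trans one_pos hu
      have hu1 : (1:ℝ) < u := hu
      rw [Real.norm_eq_abs, abs_mul, abs_of_pos (Real.exp_pos _),
        abs_of_pos (by positivity : (0:ℝ) < 1/u)]
      have : 1/u ≤ 1 := by rw [div_le_one hu0]; exact hu1.le
      nlinarith [Real.exp_pos (-(r*u))]
  have iB : IntegrableOn (fun u : ℝ => Real.exp (-(r*u)) * (1 - Real.exp (-(1/u))))
      (Ioi (1:ℝ)) := by
    refine IntegrableOn.congr_fun (iB1.add iB2) (fun u _ => by simp; ring) measurableSet_Ioi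
  -- split Ioi 0
  have hsplit1 : ∫ u in Ioi (0:ℝ), Real.exp (-(r*u)) * (1 - Real.exp (-(1/u)))
      = (∫ u in Ioc (0:ℝ) 1, Real.exp (-(r*u)) * (1 - Real.exp (-(1/u))))
        + ∫ u in Ioi (1:ℝ), Real.exp (-(r*u)) * (1 - Real.exp (-(1/u))) := by
    rw [← Ioc_union_Ioi_eq_Ioi zero_le_one]
    exact setIntegral_union (Ioc_disjoint_Ioi le_rfl) measurableSet_Ioi iA iB
  -- split Ioi 1 integrand
  have hsplit2 : ∫ u in Ioi (1:ℝ), Real.exp (-(r*u)) * (1 - Real.exp (-(1/u)))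
      = (∫ u in Ioi (1:ℝ), Real.exp (-(r*u)) * (1 - Real.exp (-(1/u)) - 1/u))
        + ∫ u in Ioi (1:ℝ), Real.exp (-(r*u)) * (1/u) := by
    rw [← integral_add iB1 iB2]
    exact setIntegral_congr_fun measurableSet_Ioi (fun u _ => by ring)
  -- substitution on the tail term
  have hsub : ∫ u in Ioi (1:ℝ), Real.exp (-(r*u)) * (1/u) = ∫ v in Ioi r, Real.exp (-v)/v := by
    have hs := integral_comp_mul_left_Ioi (fun v => Real.exp (-v)/v) 1 hr0
    rw [mul_one] at hs
    have h1 : ∫ u in Ioi (1:ℝ), Real.exp (-(r*u)) * (1/u)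
        = ∫ u in Ioi (1:ℝ), r * (Real.exp (-(r*u))/(r*u)) := by
      refine setIntegral_congr_fun measurableSet_Ioi (fun u hu => ?_)
      have hu0 : (0:ℝ) < u := lt_trans one_pos hu
      field_simp
    rw [h1, MeasureTheory.integral_const_mul, hs, smul_eq_mul]
    field_simp
  -- split Ioi r
  have iC1 : IntegrableOn (fun v : ℝ => Real.exp (-v)/v) (Ioc r 1) := by
    refine integrableOn_of_bddOn measurableSet_Ioc measure_Ioc_lt_top ?_ (C := r⁻¹) ?_
    · exact (by fun_prop : ContinuousOn (fun v : ℝ => Real.exp (-v)) _).div continuousOn_id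
        (fun x hx => ne_of_gt (lt_trans hr0 hx.1))
    · intro v hv
      have hv0 : (0:ℝ) < v := lt_trans hr0 hv.1
      rw [abs_div, abs_of_pos (Real.exp_pos _), abs_of_pos hv0, div_le_iff₀ hv0]
      have h1 : Real.exp (-v) ≤ 1 := Real.exp_le_one_iff.2 (by linarith)
      have h2 : r⁻¹ * r ≤ r⁻¹ * v := by
        refine mul_le_mul_of_nonneg_left hv.1.le (by positivity)
      rw [inv_mul_cancel₀ (ne_of_gt hr0)] at h2
      linarith
  have hsplit3 : ∫ v in Ioi r, Real.exp (-v)/v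
      = (∫ v in Ioc r 1, Real.exp (-v)/v) + ∫ t in Ioi (1:ℝ), Real.exp (-t)/t := by
    rw [← Ioc_union_Ioi_eq_Ioi hr1.le]
    exact setIntegral_union (Ioc_disjoint_Ioi le_rfl) measurableSet_Ioi iC1 intOn_exp_div_Ioi
  -- split the middle piece
  have iD1 : IntegrableOn (fun v : ℝ => (Real.exp (-v) - 1)/v) (Ioc r 1) :=
    intOn_expm1_div.mono_set (Ioc_subset_Ioc_left hr0.le)
  have iD2 : IntegrableOn (fun v : ℝ => (1:ℝ)/v) (Ioc r 1) := by
    refine integrableOn_of_bddOn measurableSet_Ioc measure_Ioc_lt_top ?_ (C := r⁻¹) ?_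
    · exact continuousOn_const.div continuousOn_id (fun x hx => ne_of_gt (lt_trans hr0 hx.1))
    · intro v hv
      have hv0 : (0:ℝ) < v := lt_trans hr0 hv.1
      rw [abs_div, abs_of_pos one_pos, abs_of_pos hv0, div_le_iff₀ hv0]
      have h2 : r⁻¹ * r ≤ r⁻¹ * v := mul_le_mul_of_nonneg_left hv.1.le (by positivity)
      rw [inv_mul_cancel₀ (ne_of_gt hr0)] at h2
      linarith
  have hsplit4 : ∫ v in Ioc r 1, Real.exp (-v)/v
      = (∫ v in Ioc r 1, (Real.exp (-v) - 1)/v) + ∫ v in Ioc r 1, (1:ℝ)/v := by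
    rw [← integral_add iD1 iD2]
    refine setIntegral_congr_fun measurableSet_Ioc (fun v hv => ?_)
    have hv0 : (0:ℝ) < v := lt_trans hr0 hv.1
    field_simp
    ring
  have hlog : ∫ v in Ioc r 1, (1:ℝ)/v = -Real.log r := by
    have := intervalIntegral.integral_of_le (f := fun v : ℝ => v⁻¹) (μ := volume) hr1.le
    have h2 := integral_inv_of_pos hr0 one_pos
    rw [this] at h2
    simp only [one_div]
    rw [h2, one_div, Real.log_inv]
  have hind : ∫ v in Ioc r 1, (Real.exp (-v) - 1)/v
      = ∫ v in Ioc (0:ℝ) 1, (Ioi r).indicator (fun v => (Real.exp (-v) - 1)/v) v := by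
    rw [integral_indicator measurableSet_Ioi, Measure.restrict_restrict measurableSet_Ioi,
      Ioi_inter_Ioc hr0]
  rw [hsplit1, hsplit2, hsub, hsplit3, hsplit4, hlog, hind]
  ring

/-- With `γ` the Euler–Mascheroni constant and
`F(r) = 1 − ∫₀^∞ exp(−(t + r/t)) dt`, we have
`lim_{r → 0⁺} F(r) / (r·(1 − 2γ − ln r)) = 1`. -/
theorem tendsto_cdf_div_asymptotic :
    Tendsto
      (fun r : ℝ =>
        (1 - ∫ t in Ioi (0 : ℝ), Real.exp (-(t + r / t))) /
          (r * (1 - 2 * Real.eulerMascheroniConstant - Real.log r)))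
      (nhdsWithin 0 (Ioi 0)) (nhds 1) := by
  set c : ℝ := 1 - 2 * Real.eulerMascheroniConstant with hc
  set Φ : ℝ → ℝ := fun r =>
    (∫ u in Ioc (0:ℝ) 1, Real.exp (-(r*u)) * (1 - Real.exp (-(1/u))))
    + (∫ u in Ioi (1:ℝ), Real.exp (-(r*u)) * (1 - Real.exp (-(1/u)) - 1/u))
    + (∫ v in Ioc (0:ℝ) 1, (Ioi r).indicator (fun v => (Real.exp (-v) - 1)/v) v)
    + (∫ t in Ioi (1:ℝ), Real.exp (-t)/t) with hPhi
  have hΦ : Tendsto Φ (nhdsWithin 0 (Ioi 0)) (nhds c) := by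
    rw [hc, ← keyConst]
    exact ((T1.add T2).add T3).add tendsto_const_nhds
  have hd : Tendsto (fun r : ℝ => c - Real.log r) (nhdsWithin 0 (Ioi 0)) atTop := by
    have hlog : Tendsto Real.log (nhdsWithin 0 (Ioi 0)) atBot :=
      Real.tendsto_log_nhdsGT_zero
    have := tendsto_neg_atTop_iff.2 hlog
    exact tendsto_atTop_add_const_left _ c (by simpa [sub_eq_add_neg] using this)
  have hzero : Tendsto (fun r : ℝ => (Φ r - c) * (c - Real.log r)⁻¹)
      (nhdsWithin 0 (Ioi 0)) (nhds 0) := by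
    have h1 : Tendsto (fun r : ℝ => Φ r - c) (nhdsWithin 0 (Ioi 0)) (nhds 0) := by
      simpa using hΦ.sub_const c
    have h2 := hd.inv_tendsto_atTop
    simpa using h1.mul h2
  have hfinal : Tendsto (fun r : ℝ => (Φ r - c) * (c - Real.log r)⁻¹ + 1)
      (nhdsWithin 0 (Ioi 0)) (nhds 1) := by
    simpa using hzero.add_const 1
  refine Tendsto.congr' ?_ hfinal
  have ev1 : Ioo (0:ℝ) 1 ∈ nhdsWithin (0:ℝ) (Ioi 0) := by
    rw [show Ioo (0:ℝ) 1 = Ioi 0 ∩ Iio 1 from rfl]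
    exact inter_mem self_mem_nhdsWithin (mem_nhdsWithin_of_mem_nhds (Iio_mem_nhds one_pos))
  filter_upwards [ev1, hd.eventually_gt_atTop 0] with r hr hdr
  have hr0 : (0:ℝ) < r := hr.1
  have hE : (1 - ∫ t in Ioi (0 : ℝ), Real.exp (-(t + r / t)))
      = r * (Φ r - Real.log r) := by
    rw [E1 hr0, E2 hr, hPhi]
  have hdenom : (1:ℝ) - 2 * Real.eulerMascheroniConstant - Real.log r = c - Real.log r := by
    rw [hc]
  rw [hE, hdenom]
  rw [mul_div_mul_left _ _ (ne_of_gt hr0)]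
  have hne : c - Real.log r ≠ 0 := ne_of_gt hdr
  field_simp
  ring
end

section
/- Let g_t and g₁ be independent random variables, each exponentially distributed with rate 1, and let A > 0, p₁ > 0, p₂ > 0, γ̂_sic > 0, γ̂₁ > 0 be real numbers with p₂ > γ̂_sic · p₁. Set g = g_t · g₁ and γ̃_max = max( γ̂_sic/(A·(p₂ − γ̂_sic·p₁)), γ̂₁/(A·p₁) ). Then P( (A·p₂·g)/(A·p₁·g + 1) > γ̂_sic and A·p₁·g > γ̂₁ ) = ∫₀^∞ exp(−(t + γ̃_max/t)) dt. -/
open MeasureTheory ProbabilityTheory Real Set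

lemma aux_expMeasure_Iio_zero : expMeasure 1 (Iio 0) = 0 := by
  rw [expMeasure, gammaMeasure, withDensity_apply _ measurableSet_Iio]
  exact lintegral_gammaPDF_of_nonpos le_rfl

lemma aux_expMeasure_Iic {t : ℝ} (ht : 0 ≤ t) :
    expMeasure 1 (Iic t) = ENNReal.ofReal (1 - Real.exp (-t)) := by
  have hP : IsProbabilityMeasure (expMeasure 1) := isProbabilityMeasure_expMeasure one_pos
  have h := cdf_expMeasure_eq one_pos t
  rw [cdf_eq_real, measureReal_def, if_pos ht, one_mul] at h
  rw [← h, ENNReal.ofReal_toReal (measure_ne_top _ _)]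

lemma aux_expMeasure_Ioi {t : ℝ} (ht : 0 ≤ t) :
    expMeasure 1 (Ioi t) = ENNReal.ofReal (Real.exp (-t)) := by
  have hP : IsProbabilityMeasure (expMeasure 1) := isProbabilityMeasure_expMeasure one_pos
  have hle : 0 ≤ 1 - Real.exp (-t) :=
    sub_nonneg.mpr (Real.exp_le_one_iff.mpr (neg_nonpos.mpr ht))
  rw [← compl_Iic, measure_compl measurableSet_Iic (measure_ne_top _ _), measure_univ,
    aux_expMeasure_Iic ht, ← ENNReal.ofReal_one, ← ENNReal.ofReal_sub _ hle]
  norm_num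

lemma aux_prob_mul_gt {c : ℝ} (hc : 0 < c) :
    (((expMeasure 1).prod (expMeasure 1)) {p : ℝ × ℝ | c < p.1 * p.2}).toReal
      = ∫ t in Ioi (0 : ℝ), Real.exp (-(t + c / t)) := by
  have hP : IsProbabilityMeasure (expMeasure 1) := isProbabilityMeasure_expMeasure one_pos
  have hS : MeasurableSet {p : ℝ × ℝ | c < p.1 * p.2} :=
    measurableSet_lt measurable_const (measurable_fst.mul measurable_snd)
  have hpdf : Measurable (exponentialPDF 1) :=
    (measurable_exponentialPDFReal 1).ennreal_ofReal
  have hL : ((expMeasure 1).prod (expMeasure 1)) {p : ℝ × ℝ | c < p.1 * p.2}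
      = ∫⁻ x in Ioi (0 : ℝ), ENNReal.ofReal (Real.exp (-(x + c / x))) := by
    rw [Measure.prod_apply hS]
    have hexp : expMeasure 1 = volume.withDensity (exponentialPDF 1) := rfl
    rw [hexp, lintegral_withDensity_eq_lintegral_mul_non_measurable _ hpdf
      (ae_of_all _ fun x => ENNReal.ofReal_lt_top)]
    rw [← lintegral_indicator measurableSet_Ioi]
    refine lintegral_congr fun x => ?_
    rcases lt_trichotomy x 0 with hx | hx | hx
    · rw [Pi.mul_apply, exponentialPDF_of_neg hx, zero_mul]
      exact (indicator_of_notMem (fun h => absurd (mem_Ioi.mp h) (not_lt.mpr hx.le)) _).symm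
    · subst hx
      have h0 : (Prod.mk (0 : ℝ) ⁻¹' {p : ℝ × ℝ | c < p.1 * p.2}) = (∅ : Set ℝ) := by
        ext y
        simp only [mem_preimage, mem_setOf_eq, zero_mul, mem_empty_iff_false, iff_false]
        linarith
      rw [Pi.mul_apply, h0, measure_empty, mul_zero]
      exact (indicator_of_notMem (fun h => absurd (mem_Ioi.mp h) (lt_irrefl 0)) _).symm
    · have hx' : (0 : ℝ) < x := hx
      have hpre : (Prod.mk x ⁻¹' {p : ℝ × ℝ | c < p.1 * p.2}) = Ioi (c / x) := by
        ext y
        simp only [mem_preimage, mem_setOf_eq, mem_Ioi]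
        rw [div_lt_iff₀ hx', mul_comm]
      rw [Pi.mul_apply, hpre, ← hexp, aux_expMeasure_Ioi (le_of_lt (div_pos hc hx')),
        exponentialPDF_of_nonneg hx'.le, one_mul, one_mul,
        indicator_of_mem (by simpa using hx'),
        ← ENNReal.ofReal_mul (Real.exp_nonneg _), ← Real.exp_add]
      ring_nf
  rw [hL]
  have hmeas : AEStronglyMeasurable (fun x : ℝ => Real.exp (-(x + c / x)))
      (volume.restrict (Ioi 0)) :=
    ((measurable_id.add (measurable_const.div measurable_id)).neg.exp).aestronglyMeasurable
  rw [integral_eq_lintegral_of_nonneg_ae (ae_of_all _ fun x => Real.exp_nonneg _) hmeas]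

/-- Theorem 1 specialized to a single port. With `g_t, g₁` independent
rate-1 exponentials, `g = g_t·g₁`, and `p₂ > γ̂_sic·p₁`,
`P((A·p₂·g)/(A·p₁·g + 1) > γ̂_sic ∧ A·p₁·g > γ̂₁) = ∫₀^∞ exp(−(t + γ̃_max/t)) dt`
where `γ̃_max = max (γ̂_sic/(A·(p₂ − γ̂_sic·p₁))) (γ̂₁/(A·p₁))`. -/
theorem strong_user_success_prob_single_port {Ω : Type*} [MeasureSpace Ω]
    [IsProbabilityMeasure (ℙ : Measure Ω)] (gt g₁ : Ω → ℝ)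
    (hind : IndepFun gt g₁ ℙ)
    (hgt : Measure.map gt ℙ = expMeasure 1) (hg₁ : Measure.map g₁ ℙ = expMeasure 1)
    (A p₁ p₂ γsic γ₁ : ℝ)
    (hA : 0 < A) (hp₁ : 0 < p₁) (hp₂ : 0 < p₂) (hγsic : 0 < γsic) (hγ₁ : 0 < γ₁)
    (hp : p₂ > γsic * p₁) :
    (ℙ {ω | (A * p₂ * (gt ω * g₁ ω)) / (A * p₁ * (gt ω * g₁ ω) + 1) > γsic ∧
            A * p₁ * (gt ω * g₁ ω) > γ₁}).toReal
      = ∫ t in Ioi (0 : ℝ),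
          Real.exp (-(t + max (γsic / (A * (p₂ - γsic * p₁))) (γ₁ / (A * p₁)) / t)) := by
  set c : ℝ := max (γsic / (A * (p₂ - γsic * p₁))) (γ₁ / (A * p₁)) with hc_def
  have hB : 0 < A * (p₂ - γsic * p₁) := mul_pos hA (sub_pos.mpr hp)
  have hc : 0 < c := lt_max_of_lt_left (div_pos hγsic hB)
  have hPexp : IsProbabilityMeasure (expMeasure 1) := isProbabilityMeasure_expMeasure one_pos
  -- aemeasurability
  have hmgt : AEMeasurable gt ℙ := by
    by_contra h
    rw [Measure.map_of_not_aemeasurable h] at hgt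
    have h1 := hPexp.measure_univ
    rw [← hgt] at h1
    simp at h1
  have hmg1 : AEMeasurable g₁ ℙ := by
    by_contra h
    rw [Measure.map_of_not_aemeasurable h] at hg₁
    have h1 := hPexp.measure_univ
    rw [← hg₁] at h1
    simp at h1
  -- a.e. nonneg
  have hgt0 : ∀ᵐ ω ∂(ℙ : Measure Ω), 0 ≤ gt ω := by
    rw [ae_iff]
    have : (ℙ : Measure Ω) (gt ⁻¹' Iio 0) = 0 := by
      rw [← Measure.map_apply_of_aemeasurable hmgt measurableSet_Iio, hgt,
        aux_expMeasure_Iio_zero]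
    simp only [not_le]; exact this
  have hg10 : ∀ᵐ ω ∂(ℙ : Measure Ω), 0 ≤ g₁ ω := by
    rw [ae_iff]
    have : (ℙ : Measure Ω) (g₁ ⁻¹' Iio 0) = 0 := by
      rw [← Measure.map_apply_of_aemeasurable hmg1 measurableSet_Iio, hg₁,
        aux_expMeasure_Iio_zero]
    simp only [not_le]; exact this
  -- pointwise equivalence for nonneg g
  have key : ∀ g : ℝ, 0 ≤ g →
      ((A * p₂ * g / (A * p₁ * g + 1) > γsic ∧ A * p₁ * g > γ₁) ↔ c < g) := by
    intro g hg
    have hD : 0 < A * p₁ * g + 1 := by positivity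
    rw [gt_iff_lt, gt_iff_lt, lt_div_iff₀ hD, hc_def, max_lt_iff, div_lt_iff₀ hB,
      div_lt_iff₀ (mul_pos hA hp₁)]
    constructor
    · rintro ⟨h1, h2⟩
      exact ⟨by nlinarith, by nlinarith⟩
    · rintro ⟨h1, h2⟩
      exact ⟨by nlinarith, by nlinarith⟩
  -- event rewriting
  have hS : MeasurableSet {p : ℝ × ℝ | c < p.1 * p.2} :=
    measurableSet_lt measurable_const (measurable_fst.mul measurable_snd)
  have hev : {ω | (A * p₂ * (gt ω * g₁ ω)) / (A * p₁ * (gt ω * g₁ ω) + 1) > γsic ∧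
        A * p₁ * (gt ω * g₁ ω) > γ₁}
      =ᵐ[(ℙ : Measure Ω)] ((fun ω => (gt ω, g₁ ω)) ⁻¹' {p : ℝ × ℝ | c < p.1 * p.2}) := by
    filter_upwards [hgt0, hg10] with ω h1 h2
    have := key (gt ω * g₁ ω) (mul_nonneg h1 h2)
    simp only [eq_iff_iff, mem_setOf_eq, mem_preimage]
    exact this
  have hmap : Measure.map (fun ω => (gt ω, g₁ ω)) ℙ = (expMeasure 1).prod (expMeasure 1) := by
    rw [(indepFun_iff_map_prod_eq_prod_map_map hmgt hmg1).mp hind, hgt, hg₁]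
  rw [measure_congr hev,
    ← Measure.map_apply_of_aemeasurable (hmgt.prodMk hmg1) hS, hmap]
  exact aux_prob_mul_gt hc
end
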